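/- arXiv:1902.00706 — 2 statements merged into one kernel-verified Lean document; each statement's English description precedes it below -/
import Mathlib

section
/- Let θ > 0, β > 0, and define g(x,y) = (1/(1+θy)) · exp(−θβx/(1+θy)) for x ≥ 0 and y ∈ [0,1]. Then for every k ∈ ℕ there exists C > 0 such that for all n ∈ ℕ with n ≥ 1 and all x ≥ 0, |g(x, n^{−1/2}) − Σ_{m=0}^{k} (n^{−m/2}/m!) · ∂^m g/∂y^m (x, 0)| ≤ C · n^{−(k+1)/2}. -/
/-! With `s = (1 + θ y)⁻¹`, induction shows that the `m`-th `y`-derivative of `g(x, y)` is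
`s^(m+1) Q_m(x s) e^(-θβ x s)` for a polynomial `Q_m` that does not depend on `x`. For `y ≥ 0` we
have `0 < s ≤ 1`, and a polynomial times `e^(-θβ u)` is bounded on `u ≥ 0`, so the `(k+1)`-st
derivative is bounded uniformly in `x ≥ 0` and `y ≥ 0`. Taylor's theorem with the Lagrange
remainder at `y = n^(-1/2)` then gives the estimate. -/

open Real Finset Polynomial

theorem abs_sub_sum_taylor_le {f : ℝ → ℝ} {a b M : ℝ} {k : ℕ} (hab : a < b)
    (hf : ∀ y ∈ Set.Icc a b, ContDiffAt ℝ (k + 1) f y)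
    (hM : ∀ y ∈ Set.Ioo a b, |iteratedDeriv (k + 1) f y| ≤ M) :
    |f b - ∑ m ∈ range (k + 1), (b - a) ^ m / m.factorial * iteratedDeriv m f a|
      ≤ M * (b - a) ^ (k + 1) / (k + 1).factorial := by
  have hf' : ContDiffOn ℝ (k + 1) f (Set.uIcc a b) := fun y hy =>
    (hf y (Set.uIcc_of_le hab.le ▸ hy)).contDiffWithinAt
  obtain ⟨y, hy, hrem⟩ := taylor_mean_remainder_lagrange_iteratedDeriv hab.ne hf'
  have htaylor : taylorWithinEval f k (Set.uIcc a b) a b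
      = ∑ m ∈ range (k + 1), (b - a) ^ m / m.factorial * iteratedDeriv m f a := by
    rw [taylor_within_apply]
    refine sum_congr rfl fun m hm => ?_
    have hfa : ContDiffAt ℝ m f a :=
      (hf a (Set.left_mem_Icc.2 hab.le)).of_le (by exact_mod_cast (mem_range.1 hm).le)
    rw [iteratedDerivWithin_eq_iteratedDeriv (uniqueDiffOn_uIcc hab.ne) hfa
      Set.left_mem_uIcc, smul_eq_mul]
    ring
  rw [← htaylor, hrem, abs_div, abs_mul, abs_pow, abs_of_pos (sub_pos.2 hab), Nat.abs_cast]
  gcongr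
  exact hM y (Set.uIoo_of_le hab.le ▸ hy)

theorem pow_mul_exp_neg_mul_le {c u : ℝ} (hc : 0 < c) (hu : 0 ≤ u) (i : ℕ) :
    u ^ i * exp (-(c * u)) ≤ i.factorial / c ^ i := by
  have hexp : (c * u) ^ i / i.factorial ≤ exp (c * u) :=
    pow_div_factorial_le_exp _ (mul_nonneg hc.le hu) i
  calc u ^ i * exp (-(c * u))
        = (c * u) ^ i / i.factorial * exp (-(c * u)) * (i.factorial / c ^ i) := by
        field_simp; ring
    _ ≤ exp (c * u) * exp (-(c * u)) * (i.factorial / c ^ i) := by gcongr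
    _ = i.factorial / c ^ i := by rw [← exp_add, add_neg_cancel, exp_zero, one_mul]

theorem Polynomial.exists_abs_eval_mul_exp_neg_le {c : ℝ} (hc : 0 < c) (p : ℝ[X]) :
    ∃ M, ∀ u, 0 ≤ u → |p.eval u * exp (-(c * u))| ≤ M := by
  induction p using Polynomial.induction_on' with
  | add p q hp hq =>
    obtain ⟨Mp, hMp⟩ := hp
    obtain ⟨Mq, hMq⟩ := hq
    refine ⟨Mp + Mq, fun u hu => ?_⟩
    rw [eval_add, add_mul]
    exact (abs_add_le _ _).trans (add_le_add (hMp u hu) (hMq u hu))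
  | monomial i a =>
    refine ⟨|a| * (i.factorial / c ^ i), fun u hu => ?_⟩
    rw [eval_monomial, mul_assoc, abs_mul,
      abs_of_nonneg (mul_nonneg (pow_nonneg hu i) (exp_pos _).le)]
    exact mul_le_mul_of_nonneg_left (pow_mul_exp_neg_mul_le hc hu i) (abs_nonneg a)

noncomputable def scaledExpTerm (θ c x : ℝ) (j : ℕ) (Q : ℝ[X]) (y : ℝ) : ℝ :=
  (1 + θ * y)⁻¹ ^ j * Q.eval (x * (1 + θ * y)⁻¹) * exp (-(c * x) * (1 + θ * y)⁻¹)

theorem hasDerivAt_scaledExpTerm (θ c x : ℝ) (j : ℕ) (Q : ℝ[X]) {y : ℝ} (hy : 1 + θ * y ≠ 0) :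
    HasDerivAt (scaledExpTerm θ c x j Q)
      (scaledExpTerm θ c x (j + 1)
        (C (-θ) * (C (j : ℝ) * Q + X * derivative Q - C c * X * Q)) y) y := by
  have hs : HasDerivAt (fun y => (1 + θ * y)⁻¹) (-θ * (1 + θ * y)⁻¹ ^ 2) y := by
    refine ((hasDerivAt_inv hy).comp y
      (((hasDerivAt_id y).const_mul θ).const_add 1)).congr_deriv ?_
    simp only [mul_one, inv_pow]
    ring
  have h := ((hs.fun_pow j).mul ((Q.hasDerivAt _).comp y (hs.const_mul x))).mul
    (hs.const_mul (-(c * x))).exp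
  refine h.congr_deriv ?_
  simp only [scaledExpTerm, eval_mul, eval_add, eval_sub, eval_C, eval_X, Pi.mul_apply,
    Function.comp_apply]
  generalize (1 + θ * y)⁻¹ = s
  rcases j with _ | j
  · simp only [CharP.cast_eq_zero]; ring
  · push_cast; ring

theorem contDiffAt_inv_one_add_mul_exp (θ c x : ℝ) {y : ℝ} (hy : 1 + θ * y ≠ 0)
    (n : WithTop ℕ∞) :
    ContDiffAt ℝ n (fun y => (1 + θ * y)⁻¹ * exp (-(c * x) / (1 + θ * y))) y := by
  have hlin : ContDiffAt ℝ n (fun y => 1 + θ * y) y := by fun_prop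
  exact (hlin.inv hy).mul (contDiffAt_const.div hlin hy).exp

theorem exists_iteratedDeriv_eq_scaledExpTerm (θ c : ℝ) (m : ℕ) :
    ∃ Q : ℝ[X], ∀ x y, 1 + θ * y ≠ 0 →
      iteratedDeriv m (fun y => (1 + θ * y)⁻¹ * exp (-(c * x) / (1 + θ * y))) y
        = scaledExpTerm θ c x (m + 1) Q y := by
  induction m with
  | zero => exact ⟨1, fun x y _ => by simp [scaledExpTerm, div_eq_mul_inv]⟩
  | succ m ih =>
    obtain ⟨Q, hQ⟩ := ih
    refine ⟨C (-θ) * (C ((m + 1 : ℕ) : ℝ) * Q + X * derivative Q - C c * X * Q), fun x y hy => ?_⟩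
    have hopen : IsOpen {y : ℝ | 1 + θ * y ≠ 0} := isOpen_ne_fun (by fun_prop) (by fun_prop)
    have heq := Filter.eventuallyEq_of_mem (hopen.mem_nhds hy) (hQ x)
    rw [iteratedDeriv_succ, heq.deriv_eq, (hasDerivAt_scaledExpTerm θ c x (m + 1) Q hy).deriv]

theorem exists_abs_scaledExpTerm_le {θ c : ℝ} (hθ : 0 ≤ θ) (hc : 0 < c) (j : ℕ) (Q : ℝ[X]) :
    ∃ M, 0 < M ∧ ∀ x, 0 ≤ x → ∀ y, 0 ≤ y → |scaledExpTerm θ c x j Q y| ≤ M := by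
  obtain ⟨M, hM⟩ := Q.exists_abs_eval_mul_exp_neg_le hc
  refine ⟨max M 1, by positivity, fun x hx y hy => ?_⟩
  set s := (1 + θ * y)⁻¹
  have hs0 : 0 < s := inv_pos.2 (by positivity)
  have hs1 : s ≤ 1 := inv_le_one_of_one_le₀ (by nlinarith)
  have hterm : scaledExpTerm θ c x j Q y = s ^ j * (Q.eval (x * s) * exp (-(c * (x * s)))) := by
    simp only [scaledExpTerm, s]; ring_nf
  rw [hterm, abs_mul, abs_of_pos (pow_pos hs0 j)]
  calc s ^ j * |Q.eval (x * s) * exp (-(c * (x * s)))| ≤ 1 * max M 1 := by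
        gcongr
        · exact pow_le_one₀ hs0.le hs1
        · exact (hM _ (mul_nonneg hx hs0.le)).trans (le_max_left _ _)
    _ = max M 1 := one_mul _

theorem uniform_expansion_exp_claims (θ β : ℝ) (hθ : 0 < θ) (hβ : 0 < β) (k : ℕ) :
    ∃ C : ℝ, 0 < C ∧ ∀ n : ℕ, 1 ≤ n → ∀ x : ℝ, 0 ≤ x →
      |(1 + θ * ((n : ℝ) ^ (-(1:ℝ)/2)))⁻¹ *
          Real.exp (-(θ * β * x) / (1 + θ * ((n : ℝ) ^ (-(1:ℝ)/2))))
        - ∑ m ∈ Finset.range (k + 1),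
            ((n : ℝ) ^ (-(m : ℝ)/2) / (Nat.factorial m)) *
              iteratedDeriv m
                (fun y : ℝ => (1 + θ * y)⁻¹ * Real.exp (-(θ * β * x) / (1 + θ * y))) 0|
        ≤ C * (n : ℝ) ^ (-((k : ℝ) + 1)/2) := by
  obtain ⟨Q, hQ⟩ := exists_iteratedDeriv_eq_scaledExpTerm θ (θ * β) (k + 1)
  obtain ⟨M, hM0, hM⟩ := exists_abs_scaledExpTerm_le hθ.le (mul_pos hθ hβ) (k + 2) Q
  refine ⟨M, hM0, fun n hn x hx => ?_⟩
  have hn0 : (0 : ℝ) ≤ n := n.cast_nonneg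
  have hpow (e : ℕ) : ((n : ℝ) ^ (-(1 : ℝ) / 2)) ^ e = (n : ℝ) ^ (-(e : ℝ) / 2) := by
    rw [← rpow_mul_natCast hn0]; ring_nf
  set t := (n : ℝ) ^ (-(1 : ℝ) / 2)
  have ht : 0 < t := rpow_pos_of_pos (by exact_mod_cast hn) _
  have hθt (y : ℝ) (hy : 0 ≤ y) : 1 + θ * y ≠ 0 := by positivity
  have htaylor := abs_sub_sum_taylor_le
    (f := fun y => (1 + θ * y)⁻¹ * exp (-(θ * β * x) / (1 + θ * y))) (M := M) ht
    (fun y hy => contDiffAt_inv_one_add_mul_exp θ _ x (hθt y hy.1) _)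
    (fun y hy => (hQ x y (hθt y hy.1.le)).symm ▸ hM x hx y hy.1.le)
  simp only [sub_zero, hpow] at htaylor
  calc _ ≤ M * (n : ℝ) ^ (-((k + 1 : ℕ) : ℝ) / 2) / (k + 1).factorial := htaylor
    _ ≤ M * (n : ℝ) ^ (-((k + 1 : ℕ) : ℝ) / 2) :=
      div_le_self (by positivity) (by exact_mod_cast (k + 1).factorial_pos)
    _ = M * (n : ℝ) ^ (-((k : ℝ) + 1) / 2) := by push_cast; ring_nf
end

section
/- Let θ > 0, β > 0. Define for x > 0 the function E(x) = e^{−(2/3)θβx}(1 + (8θ/(9√n))((2/3)θβx − 1)) and ψₙ as the exact ruin probability with Gamma(2, √nβ) claims. Then lim_{n→∞} √n(ψₙ(0) − e^{0}) = −θ, while the limit as x → 0⁺ of lim_{n→∞} √n(ψₙ(x) − e^{−(2/3)θβx}) equals −(8/9)θ; in particular −θ ≠ −(8/9)θ, so the first-order coefficient is discontinuous at x = 0. -/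
open Real Filter

noncomputable def Rg (θ β : ℝ) (n : ℕ) : ℝ :=
  (Real.sqrt n * β / (4 * (1 + θ / Real.sqrt n))) *
    ((3 + 4 * θ / Real.sqrt n) - Real.sqrt (9 + 8 * θ / Real.sqrt n))

noncomputable def rg (θ β : ℝ) (n : ℕ) : ℝ :=
  (Real.sqrt n * β / (4 * (1 + θ / Real.sqrt n))) *
    ((3 + 4 * θ / Real.sqrt n) + Real.sqrt (9 + 8 * θ / Real.sqrt n))

noncomputable def psiGamma (θ β : ℝ) (n : ℕ) (x : ℝ) : ℝ :=
  θ / (2 * (1 + θ / Real.sqrt n)) *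
    ((2 * β - Rg θ β n / Real.sqrt n) /
        (2 * θ * β - (3 + 4 * θ / Real.sqrt n) / 2 * Rg θ β n) * Real.exp (-(Rg θ β n) * x)
      + (2 * β - rg θ β n / Real.sqrt n) /
        (2 * θ * β - (3 + 4 * θ / Real.sqrt n) / 2 * rg θ β n) * Real.exp (-(rg θ β n) * x))

/-! Put `u = θ / √n`. Then `ψₙ(x) = P(u) e^{-R(u) x} + Q(u) e^{-r(u) x}` with `P`, `Q`, `R`
(`slowCoeff`, `fastCoeff`, `slowRate`) differentiable at `u = 0`, `P(0) = 1`, `Q(0) = 0`,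
`R(0) = 2θβ/3`, while the fast rate `r(u) ~ 3θβ/(2u)` blows up. Since `√n = θ / u`, the rescaled
error `√n (ψₙ(x) - e^{-2θβx/3})` is `θ` times a difference quotient at `u = 0`. At `x = 0` it is
that of `P + Q`, with limit `θ (P' + Q')(0) = -θ`; for `x > 0` the factor `e^{-r(u) x}` kills the
`Q` term, leaving `θ (P e^{-R x})'(0)`, which tends to `θ P'(0) = -8θ/9` as `x → 0⁺`. The gap is
the contribution `θ Q'(0) = -θ/9` of the fast exponential, present only at `x = 0`. -/

open Topology

namespace GammaRuin

noncomputable def sqrtDisc (u : ℝ) : ℝ := √(9 + 8 * u)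

noncomputable def slowCoeff (u : ℝ) : ℝ :=
  (3 + 2 * u + sqrtDisc u) / (2 * (1 + u) * sqrtDisc u)

noncomputable def fastCoeff (u : ℝ) : ℝ :=
  -(u * (5 + 4 * u - sqrtDisc u)) / ((1 + u) * sqrtDisc u * (3 + 4 * u + sqrtDisc u))

noncomputable def slowRate (θ β u : ℝ) : ℝ := 4 * θ * β / (3 + 4 * u + sqrtDisc u)

noncomputable def fastRate (θ β u : ℝ) : ℝ :=
  θ * β * (3 + 4 * u + sqrtDisc u) / (4 * u * (1 + u))

lemma sqrtDisc_zero : sqrtDisc 0 = 3 := by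
  rw [sqrtDisc, show (9 : ℝ) + 8 * 0 = 3 ^ 2 by norm_num, sqrt_sq (by norm_num)]

lemma sqrtDisc_pos {u : ℝ} (hu : 0 ≤ u) : 0 < sqrtDisc u := sqrt_pos.2 (by linarith)

lemma sqrtDisc_sq {u : ℝ} (hu : 0 ≤ u) : sqrtDisc u ^ 2 = 9 + 8 * u := sq_sqrt (by linarith)

section Algebra

variable {θ : ℝ} (β : ℝ) {n : ℕ}

-- After abstracting `√n = s`, `θ / √n = u` (so `θ = s u`) and `sqrtDisc u = S`, each identity is
-- rational-function algebra modulo `S ^ 2 = 9 + 8 u`.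
lemma Rg_eq (hθ : 0 < θ) (hn : n ≠ 0) : Rg θ β n = slowRate θ β (θ / √n) := by
  have hs : 0 < √(n : ℝ) := sqrt_pos.2 (by positivity)
  have hu : 0 < θ / √n := div_pos hθ hs
  have hS := sqrtDisc_pos hu.le
  have hS2 := sqrtDisc_sq hu.le
  have hθu : θ = √n * (θ / √n) := by field_simp
  rw [Rg, slowRate, mul_div_assoc 8, mul_div_assoc 4,
    show √(9 + 8 * (θ / √n)) = sqrtDisc (θ / √n) from rfl]
  generalize sqrtDisc (θ / √n) = S at hS hS2 ⊢
  generalize θ / √n = u at hu hS hS2 hθu ⊢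
  generalize √(n : ℝ) = s at hs hθu ⊢
  subst hθu
  field_simp
  linear_combination (-β) * hS2

lemma rg_eq (hθ : 0 < θ) (hn : n ≠ 0) : rg θ β n = fastRate θ β (θ / √n) := by
  have hs : 0 < √(n : ℝ) := sqrt_pos.2 (by positivity)
  have hu : 0 < θ / √n := div_pos hθ hs
  have hθu : θ = √n * (θ / √n) := by field_simp
  rw [rg, fastRate, mul_div_assoc 8, mul_div_assoc 4,
    show √(9 + 8 * (θ / √n)) = sqrtDisc (θ / √n) from rfl]
  generalize sqrtDisc (θ / √n) = S
  generalize θ / √n = u at hu hθu ⊢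
  generalize √(n : ℝ) = s at hs hθu ⊢
  subst hθu
  field_simp

lemma slowCoeff_eq (hθ : 0 < θ) (hβ : 0 < β) (hn : n ≠ 0) :
    θ / (2 * (1 + θ / √n)) *
      ((2 * β - Rg θ β n / √n) / (2 * θ * β - (3 + 4 * θ / √n) / 2 * Rg θ β n)) =
      slowCoeff (θ / √n) := by
  have hs : 0 < √(n : ℝ) := sqrt_pos.2 (by positivity)
  have hu : 0 < θ / √n := div_pos hθ hs
  have hS := sqrtDisc_pos hu.le
  have hS2 := sqrtDisc_sq hu.le
  have hθu : θ = √n * (θ / √n) := by field_simp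
  rw [Rg_eq β hθ hn, slowRate, slowCoeff, mul_div_assoc 4]
  generalize sqrtDisc (θ / √n) = S at hS hS2 ⊢
  generalize θ / √n = u at hu hS hS2 hθu ⊢
  generalize √(n : ℝ) = s at hs hθu ⊢
  subst hθu
  have hD : 0 < 3 + 4 * u + S := by positivity
  have hden : 2 * (s * u) * β - (3 + 4 * u) / 2 * (4 * (s * u) * β / (3 + 4 * u + S)) =
      2 * (s * u) * β * S / (3 + 4 * u + S) := by
    field_simp
    ring
  have hnum : 2 * β - 4 * (s * u) * β / (3 + 4 * u + S) / s =
      2 * β * (3 + 2 * u + S) / (3 + 4 * u + S) := by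
    field_simp
    ring
  rw [hden, hnum]
  field_simp

lemma fastCoeff_eq (hθ : 0 < θ) (hβ : 0 < β) (hn : n ≠ 0) :
    θ / (2 * (1 + θ / √n)) *
      ((2 * β - rg θ β n / √n) / (2 * θ * β - (3 + 4 * θ / √n) / 2 * rg θ β n)) =
      fastCoeff (θ / √n) := by
  have hs : 0 < √(n : ℝ) := sqrt_pos.2 (by positivity)
  have hu : 0 < θ / √n := div_pos hθ hs
  have hS := sqrtDisc_pos hu.le
  have hS2 := sqrtDisc_sq hu.le
  have hθu : θ = √n * (θ / √n) := by field_simp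
  rw [rg_eq β hθ hn, fastRate, fastCoeff, mul_div_assoc 4]
  generalize sqrtDisc (θ / √n) = S at hS hS2 ⊢
  generalize θ / √n = u at hu hS hS2 hθu ⊢
  generalize √(n : ℝ) = s at hs hθu ⊢
  subst hθu
  have hD : 0 < 3 + 4 * u + S := by positivity
  have hden :
      2 * (s * u) * β - (3 + 4 * u) / 2 * (s * u * β * (3 + 4 * u + S) / (4 * u * (1 + u))) =
      -(s * u * β * S * (3 + 4 * u + S)) / (8 * u * (1 + u)) := by
    field_simp
    linear_combination 8 * hS2
  have hnum : 2 * β - s * u * β * (3 + 4 * u + S) / (4 * u * (1 + u)) / s =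
      β * (5 + 4 * u - S) / (4 * (1 + u)) := by
    field_simp
    ring
  rw [hden, hnum]
  field_simp
  ring

theorem psiGamma_eq (hθ : 0 < θ) (hβ : 0 < β) (hn : n ≠ 0) (x : ℝ) :
    psiGamma θ β n x =
      slowCoeff (θ / √n) * exp (-slowRate θ β (θ / √n) * x) +
        fastCoeff (θ / √n) * exp (-fastRate θ β (θ / √n) * x) := by
  rw [psiGamma, mul_add, ← mul_assoc, ← mul_assoc, slowCoeff_eq β hθ hβ hn,
    fastCoeff_eq β hθ hβ hn, Rg_eq β hθ hn, rg_eq β hθ hn]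

end Algebra

lemma hasDerivAt_sqrtDisc : HasDerivAt sqrtDisc (4 / 3) 0 := by
  refine ((((hasDerivAt_id (0 : ℝ)).const_mul 8).const_add 9).sqrt (by norm_num)).congr_deriv ?_
  rw [id, mul_zero, add_zero, show (9 : ℝ) = 3 ^ 2 by norm_num, sqrt_sq (by norm_num)]
  norm_num

lemma slowCoeff_zero : slowCoeff 0 = 1 := by norm_num [slowCoeff, sqrtDisc_zero]

lemma fastCoeff_zero : fastCoeff 0 = 0 := by simp [fastCoeff]

lemma slowRate_zero (θ β : ℝ) : slowRate θ β 0 = 2 / 3 * θ * β := by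
  rw [slowRate, sqrtDisc_zero]
  ring

lemma hasDerivAt_slowCoeff : HasDerivAt slowCoeff (-(8 / 9)) 0 := by
  refine (((((hasDerivAt_id (0 : ℝ)).const_mul 2).const_add 3).add hasDerivAt_sqrtDisc).div
    ((((hasDerivAt_id (0 : ℝ)).const_add 1).const_mul 2).mul hasDerivAt_sqrtDisc)
    (by norm_num [sqrtDisc_zero])).congr_deriv ?_
  norm_num [sqrtDisc_zero]

lemma hasDerivAt_fastCoeff : HasDerivAt fastCoeff (-(1 / 9)) 0 := by
  refine (((hasDerivAt_id (0 : ℝ)).mul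
      ((((hasDerivAt_id (0 : ℝ)).const_mul 4).const_add 5).sub hasDerivAt_sqrtDisc)).neg.div
    (((((hasDerivAt_id (0 : ℝ)).const_add 1).mul hasDerivAt_sqrtDisc)).mul
      ((((hasDerivAt_id (0 : ℝ)).const_mul 4).const_add 3).add hasDerivAt_sqrtDisc))
    (by norm_num [sqrtDisc_zero])).congr_deriv ?_
  norm_num [sqrtDisc_zero]

lemma hasDerivAt_slowRate (θ β : ℝ) : HasDerivAt (slowRate θ β) (-(16 * θ * β / 27)) 0 := by
  refine ((hasDerivAt_const (0 : ℝ) (4 * θ * β)).div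
    ((((hasDerivAt_id (0 : ℝ)).const_mul 4).const_add 3).add hasDerivAt_sqrtDisc)
    (by norm_num [sqrtDisc_zero])).congr_deriv ?_
  norm_num [sqrtDisc_zero]
  ring

lemma hasDerivAt_slowTerm (θ β x : ℝ) :
    HasDerivAt (fun u => slowCoeff u * exp (-slowRate θ β u * x))
      (8 / 9 * (2 / 3 * θ * β * x - 1) * exp (-(2 / 3 * θ * β) * x)) 0 := by
  refine (hasDerivAt_slowCoeff.mul
    ((hasDerivAt_slowRate θ β).neg.mul_const x).exp).congr_deriv ?_
  simp only [Pi.neg_apply, slowCoeff_zero, slowRate_zero]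
  ring

lemma tendsto_fastRate_atTop {θ β : ℝ} (hθ : 0 < θ) (hβ : 0 < β) :
    Tendsto (fastRate θ β) (𝓝[>] 0) atTop := by
  have hcont : ContinuousAt (fun u => θ * β * (3 + 4 * u + sqrtDisc u) / (4 * (1 + u))) 0 := by
    unfold sqrtDisc
    fun_prop (disch := norm_num)
  have hlim : 0 < θ * β * (3 + 4 * 0 + sqrtDisc 0) / (4 * (1 + 0)) := by
    rw [sqrtDisc_zero]
    positivity
  refine (Tendsto.pos_mul_atTop hlim (hcont.tendsto.mono_left nhdsWithin_le_nhds)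
    tendsto_inv_nhdsGT_zero).congr' ?_
  filter_upwards [self_mem_nhdsWithin] with u (hu : 0 < u)
  rw [fastRate]
  field_simp

lemma tendsto_exp_neg_fastRate_mul {θ β x : ℝ} (hθ : 0 < θ) (hβ : 0 < β) (hx : 0 < x) :
    Tendsto (fun u => exp (-fastRate θ β u * x)) (𝓝[>] 0) (𝓝 0) := by
  simp only [neg_mul]
  exact tendsto_exp_atBot.comp
    (tendsto_neg_atTop_atBot.comp ((tendsto_fastRate_atTop hθ hβ).atTop_mul_const hx))

lemma tendsto_div_sqrt_nhdsGT_zero {θ : ℝ} (hθ : 0 < θ) :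
    Tendsto (fun n : ℕ => θ / √n) atTop (𝓝[>] 0) := by
  refine tendsto_nhdsWithin_iff.2 ⟨?_, ?_⟩
  · exact tendsto_const_nhds.div_atTop
      (tendsto_sqrt_atTop.comp tendsto_natCast_atTop_atTop)
  · filter_upwards [eventually_ne_atTop 0] with n hn
    exact div_pos hθ (sqrt_pos.2 (by positivity))

lemma tendsto_sqrt_mul_sub_of_hasDerivAt {θ d : ℝ} {g : ℝ → ℝ} (hθ : 0 < θ)
    (hg : HasDerivAt g d 0) :
    Tendsto (fun n : ℕ => √n * (g (θ / √n) - g 0)) atTop (𝓝 (θ * d)) := by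
  refine ((hg.tendsto_slope_zero_right.const_mul θ).comp
    (tendsto_div_sqrt_nhdsGT_zero hθ)).congr' ?_
  filter_upwards [eventually_ne_atTop 0] with n hn
  have hs : 0 < √(n : ℝ) := sqrt_pos.2 (by positivity)
  simp only [Function.comp_apply, smul_eq_mul, zero_add]
  field_simp

end GammaRuin

open GammaRuin

theorem first_order_coeff_discontinuous (θ β : ℝ) (hθ : 0 < θ) (hβ : 0 < β) :
    Tendsto (fun n : ℕ => Real.sqrt n * (psiGamma θ β n 0 - Real.exp 0))
      atTop (nhds (-θ)) ∧
    (∀ x : ℝ, 0 < x →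
      Tendsto (fun n : ℕ =>
          Real.sqrt n * (psiGamma θ β n x - Real.exp (-(2 / 3 * θ * β) * x)))
        atTop
        (nhds (8 * θ / 9 * (2 / 3 * θ * β * x - 1) * Real.exp (-(2 / 3 * θ * β) * x)))) ∧
    Tendsto (fun x : ℝ => 8 * θ / 9 * (2 / 3 * θ * β * x - 1) * Real.exp (-(2 / 3 * θ * β) * x))
      (nhdsWithin 0 (Set.Ioi 0)) (nhds (-(8 / 9 * θ))) ∧
    -θ ≠ -(8 / 9 * θ) := by
  refine ⟨?_, fun x hx => ?_, ?_, fun h => by linarith⟩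
  · have h := tendsto_sqrt_mul_sub_of_hasDerivAt hθ
      (hasDerivAt_slowCoeff.add hasDerivAt_fastCoeff)
    rw [show θ * (-(8 / 9) + -(1 / 9)) = -θ by ring] at h
    refine h.congr' ?_
    filter_upwards [eventually_ne_atTop 0] with n hn
    simp [psiGamma_eq β hθ hβ hn, slowCoeff_zero, fastCoeff_zero]
  · have hslow := tendsto_sqrt_mul_sub_of_hasDerivAt hθ (hasDerivAt_slowTerm θ β x)
    have hfast := (tendsto_sqrt_mul_sub_of_hasDerivAt hθ hasDerivAt_fastCoeff).mul
      ((tendsto_exp_neg_fastRate_mul hθ hβ hx).comp (tendsto_div_sqrt_nhdsGT_zero hθ))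
    convert (hslow.add hfast).congr' ?_ using 2
    · ring
    filter_upwards [eventually_ne_atTop 0] with n hn
    simp only [psiGamma_eq β hθ hβ hn, slowCoeff_zero, slowRate_zero, fastCoeff_zero,
      Function.comp_apply]
    ring
  · have hcont : Continuous fun x : ℝ =>
        8 * θ / 9 * (2 / 3 * θ * β * x - 1) * Real.exp (-(2 / 3 * θ * β) * x) := by
      fun_prop
    convert (hcont.tendsto 0).mono_left nhdsWithin_le_nhds using 2
    norm_num
    ring
end
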